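/- Let K be a field complete with respect to a nonarchimedean absolute value ‖·‖, let C > 0 and 0 < α < 1, and let A : ℕ × ℕ → K satisfy ‖A(i, j)‖ ≤ C·α^i for all i, j ∈ ℕ. Then: (1) for every k ≥ 0 the family ( det(A|_{S×S}) )_{S ⊂ ℕ, |S| = k}, indexed by the finite subsets of ℕ of cardinality k, is summable in K, with sum c_k satisfying ‖c_k‖ ≤ C^k·α^{k(k−1)/2}; and (2) for every z ∈ K the series Σ_{k≥0} (−1)^k c_k z^k converges in K. In other words, the Fredholm determinant det(I − z·A) := Σ_{k≥0} (−1)^k c_k z^k defines an entire function of z on K. -/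
import Mathlib


/-- For `A : ℕ × ℕ → K` with `‖A i j‖ ≤ C·α^i` over a complete nonarchimedean field:
(1) for every `k`, the family of determinants `det (A|_{S×S})` indexed by the finite subsets
`S ⊂ ℕ` of cardinality `k` is summable, with sum `c k` satisfying
`‖c k‖ ≤ C^k·α^{k(k−1)/2}`; and
(2) for every `z ∈ K`, the series `∑ₖ (−1)^k c_k z^k` converges, i.e. the Fredholm determinant
`det(I − zA)` is an entire function of `z`. -/
lemma aux_strictMono_le {k : ℕ} (f : Fin k → ℕ) (hf : StrictMono f) :
    ∀ i : Fin k, (i : ℕ) ≤ f i := by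
  rintro ⟨i, hi⟩
  induction i with
  | zero => exact Nat.zero_le _
  | succ n ih =>
    have h1 : n < k := Nat.lt_of_succ_lt hi
    have := hf (show (⟨n, h1⟩ : Fin k) < ⟨n + 1, hi⟩ by simp [Fin.lt_def])
    exact Nat.succ_le_of_lt (lt_of_le_of_lt (ih h1) this)

lemma aux_sum_ge (S : Finset ℕ) {k : ℕ} (h : S.card = k) :
    k * (k - 1) / 2 ≤ S.sum id := by
  classical
  have hmem : ∀ i : Fin k, S.orderEmbOfFin h i ∈ S := fun i => S.orderEmbOfFin_mem h i
  set g : Fin k → {x // x ∈ S} := fun i => ⟨S.orderEmbOfFin h i, hmem i⟩ with hg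
  have hbij : Function.Bijective g := by
    refine (Fintype.bijective_iff_injective_and_card _).mpr ⟨?_, by simp [Fintype.card_coe, h]⟩
    intro a b hab
    exact (S.orderEmbOfFin h).injective (congrArg Subtype.val hab)
  have hsum : ∑ i : Fin k, S.orderEmbOfFin h i = S.sum id := by
    rw [← Finset.sum_attach S id, ← Finset.univ_eq_attach]
    exact Fintype.sum_bijective g hbij _ (fun x : {x // x ∈ S} => (x : ℕ)) (fun i => rfl)
  calc k * (k - 1) / 2 = ∑ i ∈ Finset.range k, i := (Finset.sum_range_id k).symm
    _ = ∑ i : Fin k, (i : ℕ) := (Fin.sum_univ_eq_sum_range _ _).symm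
    _ ≤ ∑ i : Fin k, S.orderEmbOfFin h i :=
        Finset.sum_le_sum fun i _ => aux_strictMono_le _ (S.orderEmbOfFin h).strictMono i
    _ = S.sum id := hsum

lemma aux_det_bound {K : Type*} [NormedField K] [IsUltrametricDist K]
    (C α : ℝ) (hC : 0 < C) (hα0 : 0 < α)
    (A : ℕ → ℕ → K) (hA : ∀ i j, ‖A i j‖ ≤ C * α ^ i) {k : ℕ} (S : Finset ℕ) (h : S.card = k) :
    ‖(Matrix.of fun i j : {x // x ∈ S} => A i.1 j.1).det‖ ≤ C ^ k * α ^ (S.sum id) := by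
  classical
  rw [Matrix.det_apply]
  refine IsUltrametricDist.norm_sum_le_of_forall_le_of_nonneg (by positivity) ?_
  intro σ _
  have hnorm : ‖Equiv.Perm.sign σ • ∏ i, (Matrix.of fun i j : {x // x ∈ S} => A i.1 j.1) (σ i) i‖
      = ‖∏ i, (Matrix.of fun i j : {x // x ∈ S} => A i.1 j.1) (σ i) i‖ := by
    rcases Int.units_eq_one_or (Equiv.Perm.sign σ) with hs | hs <;> simp [hs, Units.smul_def]
  rw [hnorm, norm_prod]
  have hcard : Fintype.card {x // x ∈ S} = k := by simp [Fintype.card_coe, h]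
  calc ∏ i : {x // x ∈ S}, ‖(Matrix.of fun i j : {x // x ∈ S} => A i.1 j.1) (σ i) i‖
      ≤ ∏ i : {x // x ∈ S}, (C * α ^ ((σ i).1)) :=
        Finset.prod_le_prod (fun _ _ => norm_nonneg _) (fun i _ => hA _ _)
    _ = ∏ i : {x // x ∈ S}, (C * α ^ (i.1)) := Equiv.prod_comp σ (fun i : {x // x ∈ S} => C * α ^ (i.1))
    _ = C ^ k * α ^ (S.sum id) := by
        rw [Finset.prod_mul_distrib, Finset.prod_const, Finset.prod_pow_eq_pow_sum,
          Finset.card_univ, hcard]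
        congr 1
        rw [← Finset.sum_attach S id, Finset.univ_eq_attach]
        rfl

lemma aux_tendsto (r α : ℝ) (hr : 0 ≤ r) (hα0 : 0 < α) (hα1 : α < 1) :
    Filter.Tendsto (fun k : ℕ => r ^ k * α ^ (k * (k - 1) / 2)) Filter.atTop (nhds 0) := by
  obtain ⟨m, hm⟩ : ∃ m, α ^ m < 1 / (r + 1) := by
    have h := tendsto_pow_atTop_nhds_zero_of_lt_one hα0.le hα1
    exact (h.eventually_lt_const (by positivity)).exists
  have hq : r * α ^ m < 1 := by
    calc r * α ^ m ≤ r * (1 / (r + 1)) :=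
          mul_le_mul_of_nonneg_left hm.le hr
      _ = r / (r + 1) := by ring
      _ < 1 := (div_lt_one (by positivity)).mpr (by linarith)
  refine squeeze_zero' (Filter.Eventually.of_forall fun k => by positivity) ?_
      (tendsto_pow_atTop_nhds_zero_of_lt_one (by positivity) hq)
  filter_upwards [Filter.eventually_ge_atTop (2 * m + 1)] with k hk
  have hle : m * k ≤ k * (k - 1) / 2 := by
    have h1 : 2 * (m * k) ≤ k * (k - 1) := by
      have : 2 * m ≤ k - 1 := by omega
      calc 2 * (m * k) = k * (2 * m) := by ring
        _ ≤ k * (k - 1) := Nat.mul_le_mul_left _ this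
    calc m * k = 2 * (m * k) / 2 := by omega
      _ ≤ k * (k - 1) / 2 := Nat.div_le_div_right h1
  calc r ^ k * α ^ (k * (k - 1) / 2) ≤ r ^ k * α ^ (m * k) :=
        mul_le_mul_of_nonneg_left (pow_le_pow_of_le_one hα0.le hα1.le hle) (by positivity)
    _ = (r * α ^ m) ^ k := by rw [mul_pow, ← pow_mul]

theorem stmt6 {K : Type*} [NormedField K] [IsUltrametricDist K] [CompleteSpace K]
    (C α : ℝ) (hC : 0 < C) (hα0 : 0 < α) (hα1 : α < 1)
    (A : ℕ → ℕ → K) (hA : ∀ i j, ‖A i j‖ ≤ C * α ^ i) :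
    ∃ c : ℕ → K,
      (∀ k : ℕ, HasSum
        (fun S : {S : Finset ℕ // S.card = k} =>
          (Matrix.of fun i j : {x // x ∈ S.1} => A i.1 j.1).det) (c k)) ∧
      (∀ k : ℕ, ‖c k‖ ≤ C ^ k * α ^ (k * (k - 1) / 2)) ∧
      (∀ z : K, Summable fun k : ℕ => (-1 : K) ^ k * c k * z ^ k) := by
  classical
  set f : ∀ k : ℕ, {S : Finset ℕ // S.card = k} → K :=
    fun k S => (Matrix.of fun i j : {x // x ∈ S.1} => A i.1 j.1).det with hf
  have hbound : ∀ (k : ℕ) (S : {S : Finset ℕ // S.card = k}),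
      ‖f k S‖ ≤ C ^ k * α ^ (S.1.sum id) :=
    fun k S => aux_det_bound C α hC hα0 A hA S.1 S.2
  have hsummable : ∀ k, Summable (f k) := by
    intro k
    apply NonarchimedeanAddGroup.summable_of_tendsto_cofinite_zero
    rw [NormedAddCommGroup.tendsto_nhds_zero]
    intro ε hε
    have h0 : Filter.Tendsto (fun n : ℕ => C ^ k * α ^ n) Filter.atTop (nhds 0) := by
      simpa using (tendsto_pow_atTop_nhds_zero_of_lt_one hα0.le hα1).const_mul (C ^ k)
    obtain ⟨N, hN⟩ := Filter.eventually_atTop.mp (h0.eventually_lt_const hε)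
    rw [Filter.eventually_cofinite]
    have hfin : {T : Finset ℕ | T ⊆ Finset.range N}.Finite := by
      apply Set.Finite.subset ((Finset.range N).powerset.finite_toSet)
      intro T hT
      exact Finset.mem_coe.mpr (Finset.mem_powerset.mpr hT)
    refine Set.Finite.subset
      (hfin.preimage (Set.injOn_of_injective Subtype.val_injective)) ?_
    intro S hS
    have h1 : ε ≤ ‖f k S‖ := not_lt.mp hS
    have h2 : ε ≤ C ^ k * α ^ (S.1.sum id) := h1.trans (hbound k S)
    have h3 : S.1.sum id < N := by
      by_contra hcon
      exact absurd (hN _ (not_lt.mp hcon)) (not_lt.mpr h2)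
    intro i hi
    rw [Finset.mem_range]
    exact lt_of_le_of_lt (Finset.single_le_sum (f := id) (fun _ _ => Nat.zero_le _) hi) h3
  have hcnorm : ∀ k, ‖∑' S, f k S‖ ≤ C ^ k * α ^ (k * (k - 1) / 2) := by
    intro k
    have hB : (0 : ℝ) ≤ C ^ k * α ^ (k * (k - 1) / 2) := by positivity
    have hterm : ∀ S, ‖f k S‖ ≤ C ^ k * α ^ (k * (k - 1) / 2) := fun S =>
      (hbound k S).trans (mul_le_mul_of_nonneg_left
        (pow_le_pow_of_le_one hα0.le hα1.le (aux_sum_ge S.1 S.2)) (by positivity))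
    have hhs := (hsummable k).hasSum
    refine le_of_tendsto' hhs.norm ?_
    intro s
    exact IsUltrametricDist.norm_sum_le_of_forall_le_of_nonneg hB (fun i _ => hterm i)
  refine ⟨fun k => ∑' S, f k S, fun k => (hsummable k).hasSum, hcnorm, ?_⟩
  intro z
  apply NonarchimedeanAddGroup.summable_of_tendsto_cofinite_zero
  rw [Nat.cofinite_eq_atTop, tendsto_zero_iff_norm_tendsto_zero]
  refine squeeze_zero (fun k => norm_nonneg _) ?_
    (aux_tendsto (C * ‖z‖) α (by positivity) hα0 hα1)
  intro k
  calc ‖(-1 : K) ^ k * (∑' S, f k S) * z ^ k‖ = ‖∑' S, f k S‖ * ‖z‖ ^ k := by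
        simp [norm_mul, norm_pow]
    _ ≤ (C ^ k * α ^ (k * (k - 1) / 2)) * ‖z‖ ^ k :=
        mul_le_mul_of_nonneg_right (hcnorm k) (by positivity)
    _ = (C * ‖z‖) ^ k * α ^ (k * (k - 1) / 2) := by rw [mul_pow]; ring
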